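/- Let p,s ∈ ℝ with p ≠ 0 and 1 ≥ |s| > 0, and let 𝔤 = 𝔨₁₁^{p,0,0,s} be the six-dimensional real Lie algebra with basis f₁,…,f₆ and nonzero brackets [f₆,f₁] = p·f₁, [f₆,f₂] = -f₃, [f₆,f₃] = f₂, [f₆,f₄] = -s·f₅, [f₆,f₅] = s·f₄. Define J by Jf₁ = f₆, Jf₂ = f₃, Jf₃ = -f₂, Jf₄ = f₅, Jf₅ = -f₄, Jf₆ = -f₁, and let g = Σᵢ fⁱ⊗fⁱ be the inner product making f₁,…,f₆ orthonormal. Then (J,g) is a Kähler structure on 𝔤: J∘J = -id, the Nijenhuis tensor of J vanishes, g(JX,JY) = g(X,Y), and the fundamental form ω = g(J·,·) satisfies dω = 0. -/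

import Mathlib

noncomputable section

/-- The underlying vector space of a six-dimensional real Lie algebra. -/
abbrev V6 : Type := Fin 6 → ℝ

/-- The Lie bracket of the almost abelian Lie algebra determined by the matrix `A` of
`ad_{f₆}` (column `j` of `A` lists the coordinates of `[f₆, f_{j+1}]`; the ideal
`span{f₁,…,f₅}` is abelian). -/
def braa (A : Matrix (Fin 6) (Fin 6) ℝ) : V6 →ₗ[ℝ] V6 →ₗ[ℝ] V6 :=
  LinearMap.mk₂ ℝ (fun x y => x 5 • A.mulVec y - y 5 • A.mulVec x)
    (by intro x x' y; simp [Matrix.mulVec_add, Pi.add_apply, add_smul, smul_add]; module)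
    (by intro c x y; simp [Matrix.mulVec_smul, Pi.smul_apply, smul_eq_mul, mul_smul]; module)
    (by intro x y y'; simp [Matrix.mulVec_add, smul_add, add_smul]; module)
    (by intro c x y; simp [Matrix.mulVec_smul, Pi.smul_apply, smul_eq_mul, mul_smul]; module)

/-- The bilinear form on `V6` determined by a matrix `G`. -/
def gOf (G : Matrix (Fin 6) (Fin 6) ℝ) : V6 →ₗ[ℝ] V6 →ₗ[ℝ] ℝ :=
  LinearMap.mk₂ ℝ (fun x y => dotProduct x (G.mulVec y))
    (by intro x x' y; simp [add_dotProduct])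
    (by intro c x y; simp [smul_dotProduct, smul_eq_mul])
    (by intro x y y'; simp [Matrix.mulVec_add, dotProduct_add])
    (by intro c x y; simp [Matrix.mulVec_smul, dotProduct_smul, smul_eq_mul])

/-- The standard inner product, making `f₁,…,f₆` orthonormal. -/
def gstd : V6 →ₗ[ℝ] V6 →ₗ[ℝ] ℝ := gOf 1

/-- The linear endomorphism of `V6` determined by a matrix. -/
def endOf (M : Matrix (Fin 6) (Fin 6) ℝ) : V6 →ₗ[ℝ] V6 := Matrix.toLin' M

/-- `br` is a Lie bracket: antisymmetric and satisfying the Jacobi identity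
(bilinearity is built into the type). -/
def IsBracket (br : V6 →ₗ[ℝ] V6 →ₗ[ℝ] V6) : Prop :=
  (∀ x y, br x y = - br y x) ∧
  (∀ x y z, br (br x y) z + br (br y z) x + br (br z x) y = 0)

/-- The Lie algebra has an abelian ideal of codimension one. -/
def IsAlmostAbelian (br : V6 →ₗ[ℝ] V6 →ₗ[ℝ] V6) : Prop :=
  ∃ h : Submodule ℝ V6, Module.finrank ℝ h = 5 ∧
    (∀ x ∈ h, ∀ y ∈ h, br x y = 0) ∧ (∀ x : V6, ∀ y ∈ h, br x y ∈ h)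

/-- Nilpotency of the Lie algebra: some length of iterated brackets
`[x₁,[x₂,…,[xₙ,y]…]]` always vanishes. -/
def IsNilpotentBr (br : V6 →ₗ[ℝ] V6 →ₗ[ℝ] V6) : Prop :=
  ∃ n : ℕ, ∀ x : Fin n → V6, ∀ y : V6, (List.ofFn x).foldr (fun a b => br a b) y = 0

/-- The Nijenhuis tensor of `J`. -/
def Nij (br : V6 →ₗ[ℝ] V6 →ₗ[ℝ] V6) (J : V6 →ₗ[ℝ] V6) (x y : V6) : V6 :=
  br (J x) (J y) - br x y - J (br (J x) y) - J (br x (J y))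

/-- A complex structure: `J ∘ J = -id` with vanishing Nijenhuis tensor. -/
def IsCpxStr (br : V6 →ₗ[ℝ] V6 →ₗ[ℝ] V6) (J : V6 →ₗ[ℝ] V6) : Prop :=
  (∀ x, J (J x) = -x) ∧ (∀ x y, Nij br J x y = 0)

/-- A Hermitian structure: a complex structure together with a positive-definite
compatible inner product. -/
def IsHermStr (br : V6 →ₗ[ℝ] V6 →ₗ[ℝ] V6) (J : V6 →ₗ[ℝ] V6)
    (g : V6 →ₗ[ℝ] V6 →ₗ[ℝ] ℝ) : Prop :=
  IsCpxStr br J ∧ (∀ x y, g x y = g y x) ∧ (∀ x, x ≠ 0 → 0 < g x x) ∧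
    (∀ x y, g (J x) (J y) = g x y)

/-- The fundamental form `ω = g(J·,·)`. -/
def fund (J : V6 →ₗ[ℝ] V6) (g : V6 →ₗ[ℝ] V6 →ₗ[ℝ] ℝ) : V6 → V6 → ℝ :=
  fun x y => g (J x) y

/-- The Chevalley–Eilenberg differential of a 2-form. -/
def d2 (br : V6 →ₗ[ℝ] V6 →ₗ[ℝ] V6) (ω : V6 → V6 → ℝ) : V6 → V6 → V6 → ℝ :=
  fun x y z => -ω (br x y) z + ω (br x z) y - ω (br y z) x

/-- The Chevalley–Eilenberg differential of a 3-form. -/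
def d3 (br : V6 →ₗ[ℝ] V6 →ₗ[ℝ] V6) (H : V6 → V6 → V6 → ℝ) : V6 → V6 → V6 → V6 → ℝ :=
  fun x y z w => -H (br x y) z w + H (br x z) y w - H (br x w) y z
    - H (br y z) x w + H (br y w) x z - H (br z w) x y

/-- The form `dᶜω`, where `dᶜω(X,Y,Z) = dω(JX,JY,JZ)` and `ω = g(J·,·)`. -/
def dC (br : V6 →ₗ[ℝ] V6 →ₗ[ℝ] V6) (J : V6 →ₗ[ℝ] V6)
    (g : V6 →ₗ[ℝ] V6 →ₗ[ℝ] ℝ) : V6 → V6 → V6 → ℝ :=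
  fun x y z => d2 br (fund J g) (J x) (J y) (J z)

/-- A Kähler structure: a Hermitian structure with closed fundamental form. -/
def IsKahlerStr (br : V6 →ₗ[ℝ] V6 →ₗ[ℝ] V6) (J : V6 →ₗ[ℝ] V6)
    (g : V6 →ₗ[ℝ] V6 →ₗ[ℝ] ℝ) : Prop :=
  IsHermStr br J g ∧ ∀ x y z, d2 br (fund J g) x y z = 0

/-- An SKT (pluriclosed) structure: a Hermitian structure with `d(dᶜω) = 0`. -/
def IsSKTStr (br : V6 →ₗ[ℝ] V6 →ₗ[ℝ] V6) (J : V6 →ₗ[ℝ] V6)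
    (g : V6 →ₗ[ℝ] V6 →ₗ[ℝ] ℝ) : Prop :=
  IsHermStr br J g ∧ ∀ x y z w, d3 br (dC br J g) x y z w = 0

/-- A generalized Kähler structure `(J₊, J₋, g)`. -/
def IsGenKahler (br : V6 →ₗ[ℝ] V6 →ₗ[ℝ] V6) (Jp Jm : V6 →ₗ[ℝ] V6)
    (g : V6 →ₗ[ℝ] V6 →ₗ[ℝ] ℝ) : Prop :=
  IsHermStr br Jp g ∧ IsHermStr br Jm g ∧
    (∀ x y z, dC br Jp g x y z + dC br Jm g x y z = 0) ∧
    (∀ x y z w, d3 br (dC br Jp g) x y z w = 0)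

/-- Unimodularity: every adjoint operator is traceless. -/
def Unimodular (br : V6 →ₗ[ℝ] V6 →ₗ[ℝ] V6) : Prop :=
  ∀ x : V6, LinearMap.trace ℝ V6 (br x) = 0

/-- Isomorphism of Lie algebra structures on `V6`. -/
def LieIso (br br' : V6 →ₗ[ℝ] V6 →ₗ[ℝ] V6) : Prop :=
  ∃ φ : V6 ≃ₗ[ℝ] V6, ∀ x y, φ (br x y) = br' (φ x) (φ y)

/-- The basis 3-form `fⁱ ∧ fʲ ∧ f^k`. -/
def tri (i j k : Fin 6) : V6 → V6 → V6 → ℝ := fun x y z =>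
  Matrix.det !![x i, x j, x k; y i, y j, y k; z i, z j, z k]

/-- The complex structure `J f₁ = f₆`, `J f₂ = f₃`, `J f₃ = -f₂`, `J f₄ = f₅`,
`J f₅ = -f₄`, `J f₆ = -f₁`. -/
def JP : V6 →ₗ[ℝ] V6 :=
  endOf !![0,0,0,0,0,-1; 0,0,-1,0,0,0; 0,1,0,0,0,0; 0,0,0,0,-1,0; 0,0,0,1,0,0; 1,0,0,0,0,0]

/-- The Lie algebra `𝔨₁₁^{p,q,r,s}`. -/
def k11 (p q r s : ℝ) : V6 →ₗ[ℝ] V6 →ₗ[ℝ] V6 :=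
  braa !![p,0,0,0,0,0; 0,q,1,0,0,0; 0,-1,q,0,0,0; 0,0,0,r,s,0; 0,0,0,-s,r,0; 0,0,0,0,0,0]

/-!
Everything is a computation in the coordinates of `f₁,…,f₆`. On `span{f₂,f₃}` and
`span{f₄,f₅}` the operator `ad_{f₆}` of `𝔨₁₁^{p,q,r,s}` acts as `q - J` and `r - sJ`, so it
commutes with `J` there; the terms of `N_J` coming from `[f₆,f₁] = p f₁` cancel in pairs, so
`N_J = 0` for all `p, q, r, s`. The form `ω = f¹∧f⁶ + f²∧f³ + f⁴∧f⁵` is closed exactly when `ad_{f₆}` is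
skew on `span{f₂,…,f₅}`, that is when `q = r = 0`.
-/

lemma gstd_apply (x y : V6) : gstd x y = x ⬝ᵥ y := by
  simp [gstd, gOf]

lemma JP_apply (x : V6) : JP x = ![-x 5, -x 2, x 1, -x 4, x 3, x 0] := by
  ext i
  fin_cases i <;> simp [JP, endOf, Matrix.mulVec, dotProduct, Fin.sum_univ_six]

lemma k11_apply (p q r s : ℝ) (x y : V6) : k11 p q r s x y =
    x 5 • ![p * y 0, q * y 1 + y 2, -y 1 + q * y 2, r * y 3 + s * y 4, -s * y 3 + r * y 4, 0]
      - y 5 • ![p * x 0, q * x 1 + x 2, -x 1 + q * x 2, r * x 3 + s * x 4, -s * x 3 + r * x 4, 0] := by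
  ext i
  fin_cases i <;> simp [k11, braa, dotProduct, Fin.sum_univ_six]

lemma gstd_comm (x y : V6) : gstd x y = gstd y x := by
  simp only [gstd_apply, dotProduct_comm]

lemma gstd_self_pos {x : V6} (hx : x ≠ 0) : 0 < gstd x x := by
  simpa [gstd_apply] using Matrix.dotProduct_star_self_pos_iff.mpr hx

lemma JP_JP (x : V6) : JP (JP x) = -x := by
  ext i
  fin_cases i <;> simp [JP_apply]

lemma gstd_JP_JP (x y : V6) : gstd (JP x) (JP y) = gstd x y := by
  simp only [gstd_apply, JP_apply, dotProduct, Fin.sum_univ_six, Matrix.cons_val, Fin.isValue]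
  ring

lemma Nij_k11_JP (p q r s : ℝ) (x y : V6) : Nij (k11 p q r s) JP x y = 0 := by
  ext i
  fin_cases i <;> simp [Nij, JP_apply, k11_apply] <;> ring

lemma isHermStr_k11_JP_gstd (p q r s : ℝ) : IsHermStr (k11 p q r s) JP gstd :=
  ⟨⟨JP_JP, Nij_k11_JP p q r s⟩, gstd_comm, fun _ => gstd_self_pos, gstd_JP_JP⟩

lemma d2_k11_fund_JP_gstd (p s : ℝ) (x y z : V6) :
    d2 (k11 p 0 0 s) (fund JP gstd) x y z = 0 := by
  simp only [d2, fund, k11_apply, JP_apply, gstd_apply, dotProduct, Fin.sum_univ_six, Pi.sub_apply,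
    Pi.smul_apply, Matrix.cons_val, Fin.isValue, smul_eq_mul]
  ring

theorem stmt_19_general (p s : ℝ) :
    IsKahlerStr (k11 p 0 0 s) JP gstd :=
  ⟨isHermStr_k11_JP_gstd p 0 0 s, d2_k11_fund_JP_gstd p s⟩

/-- The explicit Kähler structure on `𝔨₁₁^{p,0,0,s}`. -/
theorem stmt_19 (p s : ℝ) (hp : p ≠ 0) (hs1 : 1 ≥ |s|) (hs0 : |s| > 0) :
    IsKahlerStr (k11 p 0 0 s) JP gstd :=
  stmt_19_general p s
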